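/- Let p ∈ [1,∞) with conjugate exponent q, and let R ⊆ P_q(ℝ) satisfy Assumption (OT)(i) with L_R := sup_{r ∈ R} M_q(r). Then the transport-based risk measure ρ_R : L^p(Ω,ℝ) → ℝ is L_R-Lipschitz continuous: for all X₁, X₂ ∈ L^p(Ω,ℝ), |ρ_R(X₂) − ρ_R(X₁)| ≤ L_R · ‖X₂ − X₁‖_{L^p(Ω,ℝ)}. -/

import Mathlib

open MeasureTheory ENNReal

/-- `M_s(m)`: the moment of order `s ∈ [1,∞]` of a measure `m` on `ℝ`
(for `s = ∞`, the essential supremum of `|x|`, i.e. the sup of `|x|` over the support). -/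
noncomputable def Mmom (s : ℝ≥0∞) (m : Measure ℝ) : ℝ≥0∞ :=
  eLpNorm (fun x : ℝ => x) s m

/-- Assumption (OT)(i): `R` is a bounded set of probability measures with finite `q`-moment. -/
def OTone (q : ℝ≥0∞) (R : Set (Measure ℝ)) : Prop :=
  (∀ r ∈ R, IsProbabilityMeasure r) ∧ (⨆ r ∈ R, Mmom q r) < ⊤

/-- Assumption (OT)(ii): every `r ∈ R` is supported in `[0,∞)` and has expectation `1`. -/
def OTtwo (R : Set (Measure ℝ)) : Prop :=
  ∀ r ∈ R, r (Set.Iio (0:ℝ)) = 0 ∧ ∫⁻ y, ENNReal.ofReal y ∂r = 1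

/-- The value `χ_R(m)` of the generalized optimal transport problem: the supremum of
`∫ x·y dπ` over transport plans `π` with first marginal `m` and second marginal in `R`. -/
noncomputable def chi (R : Set (Measure ℝ)) (m : Measure ℝ) : ℝ :=
  sSup {v : ℝ | ∃ π : Measure (ℝ × ℝ), IsProbabilityMeasure π ∧
    π.map Prod.fst = m ∧ π.map Prod.snd ∈ R ∧ v = ∫ z : ℝ × ℝ, z.1 * z.2 ∂π}

open ProbabilityTheory

/-!
Let `π` be a plan for the law of `X₁` with second marginal `r ∈ R`. Disintegrating `π` along its
first marginal and composing the kernel with `X₁` gives a measure `τ` on `Ω × ℝ` with first marginal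
`P` whose image under `(ω, y) ↦ (X₁ ω, y)` is `π`; its image under `(ω, y) ↦ (X₂ ω, y)` is then a
plan `π'` for the law of `X₂` with the same second marginal. By Hölder on `τ`,
`∫ xy dπ - ∫ xy dπ' = ∫ (X₁ ω - X₂ ω) y dτ ≤ ‖X₂ - X₁‖_p M_q(r) ≤ L_R ‖X₂ - X₁‖_p`, so
`χ_R(ℙ_{X₁}) ≤ χ_R(ℙ_{X₂}) + L_R ‖X₂ - X₁‖_p`; exchanging `X₁` and `X₂` gives the claim.
-/

section Holder

variable {α : Type*} [MeasurableSpace α] {μ : Measure α} {p q : ℝ≥0∞} [p.HolderConjugate q]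

theorem abs_integral_mul_le_eLpNorm_mul_eLpNorm {f g : α → ℝ} (hf : MemLp f p μ)
    (hg : MemLp g q μ) :
    |∫ x, f x * g x ∂μ| ≤ (eLpNorm f p μ).toReal * (eLpNorm g q μ).toReal := by
  have hfg : eLpNorm (fun x => f x * g x) 1 μ ≤ eLpNorm f p μ * eLpNorm g q μ := by
    simpa using eLpNorm_le_eLpNorm_mul_eLpNorm'_of_norm (p := p) (q := q) (r := 1) hf.1 hg.1
      (· * ·) 1 (.of_forall fun x => by simp [norm_mul])
  calc |∫ x, f x * g x ∂μ| = (‖∫ x, f x * g x ∂μ‖ₑ).toReal := by simp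
    _ ≤ (eLpNorm (fun x => f x * g x) 1 μ).toReal := by
      rw [eLpNorm_one_eq_lintegral_enorm]
      exact ENNReal.toReal_mono (by finiteness [(hf.integrable_mul hg).2])
        (enorm_integral_le_lintegral_enorm _)
    _ ≤ (eLpNorm f p μ).toReal * (eLpNorm g q μ).toReal := by
      rw [← ENNReal.toReal_mul]
      exact ENNReal.toReal_mono (by finiteness [hf.2, hg.2]) hfg

end Holder

theorem Mmom_map {α : Type*} [MeasurableSpace α] {μ : Measure α} {h : α → ℝ}
    (hh : AEMeasurable h μ) (s : ℝ≥0∞) : Mmom s (μ.map h) = eLpNorm h s μ :=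
  eLpNorm_map_measure measurable_id.aestronglyMeasurable hh

theorem MeasureTheory.Measure.exists_fst_eq_and_map_eq {Ω α β : Type*} [MeasurableSpace Ω]
    [MeasurableSpace α] [MeasurableSpace β] [StandardBorelSpace β] [Nonempty β]
    (P : Measure Ω) [IsProbabilityMeasure P] {X : Ω → α} (hX : Measurable X)
    (π : Measure (α × β)) [IsFiniteMeasure π] (hπ : π.fst = P.map X) :
    ∃ τ : Measure (Ω × β), IsProbabilityMeasure τ ∧ τ.fst = P ∧
      τ.map (fun z => (X z.1, z.2)) = π := by
  have hXid : Measurable (fun z : Ω × β => (X z.1, z.2)) :=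
    (hX.comp measurable_fst).prodMk measurable_snd
  refine ⟨P ⊗ₘ π.condKernel.comap X hX, inferInstance, Measure.fst_compProd _ _, ?_⟩
  conv_rhs => rw [← π.disintegrate π.condKernel, hπ]
  ext s hs
  rw [Measure.map_apply hXid hs, Measure.compProd_apply (hXid hs), Measure.compProd_apply hs,
    lintegral_map (Kernel.measurable_kernel_prodMk_left hs) hX]
  rfl

section Lift

variable {Ω β : Type*} [MeasurableSpace Ω] [MeasurableSpace β] {τ : Measure (Ω × β)}
  {X : Ω → ℝ}

theorem MeasureTheory.Measure.fst_map_prodMk_fst (hX : Measurable X) :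
    (τ.map fun z => (X z.1, z.2)).fst = τ.fst.map X := by
  rw [Measure.fst_map_prodMk measurable_snd, Measure.fst, Measure.map_map hX measurable_fst]
  rfl

theorem MeasureTheory.Measure.snd_map_prodMk_fst (hX : Measurable X) :
    (τ.map fun z => (X z.1, z.2)).snd = τ.snd :=
  Measure.snd_map_prodMk (X := fun z : Ω × β => X z.1) (hX.comp measurable_fst)

theorem eLpNorm_comp_fst {p : ℝ≥0∞} {f : Ω → ℝ} (hf : AEStronglyMeasurable f τ.fst) :
    eLpNorm (fun z => f z.1) p τ = eLpNorm f p τ.fst :=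
  (eLpNorm_map_measure hf measurable_fst.aemeasurable).symm

end Lift

theorem exists_coupling_integral_le_add {p q : ℝ≥0∞} [p.HolderConjugate q]
    {Ω : Type*} [MeasurableSpace Ω] (P : Measure Ω) [IsProbabilityMeasure P] {X₁ X₂ : Ω → ℝ}
    (hm₁ : Measurable X₁) (hm₂ : Measurable X₂) (hX₁ : MemLp X₁ p P) (hX₂ : MemLp X₂ p P)
    (π : Measure (ℝ × ℝ)) [IsProbabilityMeasure π] (hπ : π.fst = P.map X₁)
    (hq : Mmom q π.snd ≠ ⊤) :
    ∃ π' : Measure (ℝ × ℝ), IsProbabilityMeasure π' ∧ π'.fst = P.map X₂ ∧ π'.snd = π.snd ∧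
      ∫ z, z.1 * z.2 ∂π ≤ ∫ z, z.1 * z.2 ∂π' +
        (eLpNorm (X₂ - X₁) p P).toReal * (Mmom q π.snd).toReal := by
  obtain ⟨τ, hτ, hτfst, hτπ⟩ := Measure.exists_fst_eq_and_map_eq P hm₁ π hπ
  have hτsnd : τ.snd = π.snd := by rw [← hτπ, Measure.snd_map_prodMk_fst hm₁]
  have lift {X : Ω → ℝ} (hX : MemLp X p P) :
      MemLp (fun z : Ω × ℝ => X z.1) p τ ∧
        eLpNorm (fun z : Ω × ℝ => X z.1) p τ = eLpNorm X p P := by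
    have hXτ : AEStronglyMeasurable X τ.fst := hτfst ▸ hX.1
    refine ⟨⟨hXτ.comp_measurable measurable_fst, ?_⟩, by rw [eLpNorm_comp_fst hXτ, hτfst]⟩
    rw [eLpNorm_comp_fst hXτ, hτfst]
    exact hX.2
  have integral_lift {X : Ω → ℝ} (hX : Measurable X) :
      ∫ z, z.1 * z.2 ∂(τ.map fun z => (X z.1, z.2)) = ∫ z, X z.1 * z.2 ∂τ :=
    integral_map ((hX.comp measurable_fst).prodMk measurable_snd).aemeasurable (by fun_prop)
  have hY : MemLp (fun z : Ω × ℝ => z.2) q τ ∧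
      eLpNorm (fun z : Ω × ℝ => z.2) q τ = Mmom q π.snd := by
    have h : eLpNorm (fun z : Ω × ℝ => z.2) q τ = Mmom q π.snd := by
      rw [← hτsnd, Measure.snd, Mmom_map measurable_snd.aemeasurable]
    exact ⟨⟨measurable_snd.aestronglyMeasurable, h ▸ hq.lt_top⟩, h⟩
  refine ⟨τ.map fun z => (X₂ z.1, z.2),
    Measure.isProbabilityMeasure_map ((hm₂.comp measurable_fst).prodMk measurable_snd).aemeasurable,
    by rw [Measure.fst_map_prodMk_fst hm₂, hτfst],
    by rw [Measure.snd_map_prodMk_fst hm₂, hτsnd], ?_⟩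
  have hdiff : ∫ z, z.1 * z.2 ∂(τ.map fun z => (X₂ z.1, z.2)) - ∫ z, z.1 * z.2 ∂π =
      ∫ z, (X₂ - X₁) z.1 * z.2 ∂τ := by
    have hint {X : Ω → ℝ} (hX : MemLp X p P) : Integrable (fun z : Ω × ℝ => X z.1 * z.2) τ :=
      (lift hX).1.integrable_mul hY.1
    rw [← hτπ, integral_lift hm₂, integral_lift hm₁, ← integral_sub (hint hX₂) (hint hX₁)]
    simp only [Pi.sub_apply, sub_mul]
  have hholder := abs_integral_mul_le_eLpNorm_mul_eLpNorm (lift (hX₂.sub hX₁)).1 hY.1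
  rw [(lift (hX₂.sub hX₁)).2, hY.2] at hholder
  linarith [neg_abs_le (∫ z, (X₂ - X₁) z.1 * z.2 ∂τ)]

def transportValues (R : Set (Measure ℝ)) (m : Measure ℝ) : Set ℝ :=
  {v : ℝ | ∃ π : Measure (ℝ × ℝ), IsProbabilityMeasure π ∧
    π.fst = m ∧ π.snd ∈ R ∧ v = ∫ z : ℝ × ℝ, z.1 * z.2 ∂π}

theorem chi_eq_sSup_transportValues (R : Set (Measure ℝ)) (m : Measure ℝ) :
    chi R m = sSup (transportValues R m) :=
  rfl

theorem transportValues_nonempty {R : Set (Measure ℝ)} (hR : ∀ r ∈ R, IsProbabilityMeasure r)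
    (hR_ne : R.Nonempty) (m : Measure ℝ) [IsProbabilityMeasure m] :
    (transportValues R m).Nonempty := by
  obtain ⟨r, hr⟩ := hR_ne
  have := hR r hr
  exact ⟨_, m.prod r, inferInstance, Measure.fst_prod,
    (Measure.snd_prod (μ := m) (ν := r)).symm ▸ hr, rfl⟩

theorem bddAbove_transportValues {p q : ℝ≥0∞} [p.HolderConjugate q] {R : Set (Measure ℝ)}
    (hR : ⨆ r ∈ R, Mmom q r ≠ ⊤) {m : Measure ℝ} (hm : Mmom p m ≠ ⊤) :
    BddAbove (transportValues R m) := by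
  refine ⟨(Mmom p m).toReal * (⨆ r ∈ R, Mmom q r).toReal, ?_⟩
  rintro _ ⟨π, hπ, rfl, hπR, rfl⟩
  have hsnd : Mmom q π.snd ≤ ⨆ r ∈ R, Mmom q r := le_biSup _ hπR
  have hq : eLpNorm (fun z : ℝ × ℝ => z.2) q π = Mmom q π.snd :=
    (Mmom_map measurable_snd.aemeasurable q).symm
  have hp : eLpNorm (fun z : ℝ × ℝ => z.1) p π = Mmom p π.fst :=
    (Mmom_map measurable_fst.aemeasurable p).symm
  have holder := abs_integral_mul_le_eLpNorm_mul_eLpNorm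
    (⟨measurable_fst.aestronglyMeasurable, hp ▸ hm.lt_top⟩ : MemLp (fun z : ℝ × ℝ => z.1) p π)
    ⟨measurable_snd.aestronglyMeasurable, hq ▸ (hsnd.trans_lt hR.lt_top)⟩
  rw [hp, hq] at holder
  exact (le_abs_self _).trans (holder.trans (mul_le_mul_of_nonneg_left
    (ENNReal.toReal_mono hR hsnd) ENNReal.toReal_nonneg))

theorem chi_map_le_chi_map_add_of_measurable {p q : ℝ≥0∞} [p.HolderConjugate q]
    {R : Set (Measure ℝ)} (hR : OTone q R) {Ω : Type*} [MeasurableSpace Ω] (P : Measure Ω)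
    [IsProbabilityMeasure P] {X₁ X₂ : Ω → ℝ} (hm₁ : Measurable X₁) (hm₂ : Measurable X₂)
    (hX₁ : MemLp X₁ p P) (hX₂ : MemLp X₂ p P) :
    chi R (P.map X₁) ≤ chi R (P.map X₂) +
      (⨆ r ∈ R, Mmom q r).toReal * (eLpNorm (X₂ - X₁) p P).toReal := by
  rcases R.eq_empty_or_nonempty with rfl | hR_ne
  · simp [chi] -- both values are `sSup ∅ = 0`
  have : IsProbabilityMeasure (P.map X₁) := Measure.isProbabilityMeasure_map hm₁.aemeasurable
  have hbdd : BddAbove (transportValues R (P.map X₂)) :=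
    bddAbove_transportValues hR.2.ne (by rw [Mmom_map hm₂.aemeasurable]; exact hX₂.2.ne)
  simp only [chi_eq_sSup_transportValues]
  refine csSup_le (transportValues_nonempty hR.1 hR_ne _) ?_
  rintro _ ⟨π, hπ, hπfst, hπR, rfl⟩
  have hsnd : Mmom q π.snd ≤ ⨆ r ∈ R, Mmom q r := le_biSup _ hπR
  obtain ⟨π', hπ', hπ'fst, hπ'snd, hle⟩ := exists_coupling_integral_le_add P hm₁ hm₂ hX₁ hX₂ π
    hπfst (hsnd.trans_lt hR.2).ne
  have hπ'mem : ∫ z, z.1 * z.2 ∂π' ∈ transportValues R (P.map X₂) :=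
    ⟨π', hπ', hπ'fst, hπ'snd ▸ hπR, rfl⟩
  calc ∫ z, z.1 * z.2 ∂π
      ≤ ∫ z, z.1 * z.2 ∂π' + (eLpNorm (X₂ - X₁) p P).toReal * (Mmom q π.snd).toReal := hle
    _ ≤ sSup (transportValues R (P.map X₂)) +
          (⨆ r ∈ R, Mmom q r).toReal * (eLpNorm (X₂ - X₁) p P).toReal := by
      rw [mul_comm]
      gcongr
      · exact le_csSup hbdd hπ'mem
      · exact hR.2.ne

theorem chi_map_le_chi_map_add {p q : ℝ≥0∞} [p.HolderConjugate q] {R : Set (Measure ℝ)}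
    (hR : OTone q R) {Ω : Type*} [MeasurableSpace Ω] (P : Measure Ω) [IsProbabilityMeasure P]
    {X₁ X₂ : Ω → ℝ} (hX₁ : MemLp X₁ p P) (hX₂ : MemLp X₂ p P) :
    chi R (P.map X₁) ≤ chi R (P.map X₂) +
      (⨆ r ∈ R, Mmom q r).toReal * (eLpNorm (X₂ - X₁) p P).toReal := by
  have hae₁ : X₁ =ᵐ[P] hX₁.1.mk X₁ := hX₁.1.ae_eq_mk
  have hae₂ : X₂ =ᵐ[P] hX₂.1.mk X₂ := hX₂.1.ae_eq_mk
  rw [Measure.map_congr hae₁, Measure.map_congr hae₂, eLpNorm_congr_ae (hae₂.sub hae₁)]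
  exact chi_map_le_chi_map_add_of_measurable hR P hX₁.1.stronglyMeasurable_mk.measurable
    hX₂.1.stronglyMeasurable_mk.measurable (hX₁.ae_eq hae₁) (hX₂.ae_eq hae₂)

theorem rho_lipschitz_general
    (p q : ℝ≥0∞) (hpq : p⁻¹ + q⁻¹ = 1)
    (R : Set (Measure ℝ)) (hR1 : OTone q R)
    (Ω : Type) [MeasurableSpace Ω] (P : Measure Ω) [IsProbabilityMeasure P]
    (X₁ X₂ : Ω → ℝ) (hX₁ : MemLp X₁ p P) (hX₂ : MemLp X₂ p P) :
    |chi R (P.map X₂) - chi R (P.map X₁)| ≤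
      (⨆ r ∈ R, Mmom q r).toReal * (eLpNorm (fun ω => X₂ ω - X₁ ω) p P).toReal := by
  have : p.HolderConjugate q := ENNReal.holderConjugate_iff.mpr hpq
  have h₁₂ := chi_map_le_chi_map_add hR1 P hX₁ hX₂
  have h₂₁ := chi_map_le_chi_map_add hR1 P hX₂ hX₁
  rw [eLpNorm_sub_comm] at h₂₁
  rw [← Pi.sub_def]
  exact abs_sub_le_iff.mpr ⟨by linarith, by linarith⟩

/-- Lipschitz continuity of the transport-based risk measure: for `R` satisfying (OT)(i)
with `L_R = sup_{r ∈ R} M_q(r)`, one has `|ρ_R(X₂) − ρ_R(X₁)| ≤ L_R ‖X₂ − X₁‖_{L^p}`. -/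
theorem rho_lipschitz
    (p q : ℝ≥0∞) (hp1 : 1 ≤ p) (hptop : p ≠ ⊤) (hpq : p⁻¹ + q⁻¹ = 1)
    (R : Set (Measure ℝ)) (hR1 : OTone q R)
    (Ω : Type) [MeasurableSpace Ω] (P : Measure Ω) [IsProbabilityMeasure P]
    (X₁ X₂ : Ω → ℝ) (hX₁ : MemLp X₁ p P) (hX₂ : MemLp X₂ p P) :
    |chi R (P.map X₂) - chi R (P.map X₁)| ≤
      (⨆ r ∈ R, Mmom q r).toReal * (eLpNorm (fun ω => X₂ ω - X₁ ω) p P).toReal :=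
  rho_lipschitz_general p q hpq R hR1 Ω P X₁ X₂ hX₁ hX₂
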